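/- Let P = ℤ≥0^r and let Q ⊆ (1/m)ℤ≥0^r be a toric submonoid containing P, such that Q = Q^gp ∩ (1/m)ℤ≥0^r. Suppose d!·Q ⊆ P where Q^gp/P^gp is annihilated by integers dividing d!. Then the saturated amalgamated sum (Q ⊕_P (1/d!)P)^sat is isomorphic to the direct sum of (1/d!)P and a finite abelian group annihilated by d!. -/

import Mathlib

section

variable {G_P G_Q G_R : Type} [AddCommGroup G_P] [AddCommGroup G_Q] [AddCommGroup G_R]

/-- The relations defining the pushout of abelian groups `Q^gp ⊕_{P^gp} R^gp` along
`φ : P^gp → Q^gp` and `ψ : P^gp → R^gp`. -/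
def pushRel (φ : G_P →+ G_Q) (ψ : G_P →+ G_R) : AddSubgroup (G_R × G_Q) :=
  AddSubgroup.closure {z | ∃ g : G_P, z = (ψ g, -(φ g))}

/-- The pushout of abelian groups; the group completion of the amalgamated sum. -/
def PushK (φ : G_P →+ G_Q) (ψ : G_P →+ G_R) : Type _ := (G_R × G_Q) ⧸ pushRel φ ψ

instance (φ : G_P →+ G_Q) (ψ : G_P →+ G_R) : AddCommGroup (PushK φ ψ) :=
  QuotientAddGroup.Quotient.addCommGroup (pushRel φ ψ)

def pushMk (φ : G_P →+ G_Q) (ψ : G_P →+ G_R) : G_R × G_Q →+ PushK φ ψ :=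
  QuotientAddGroup.mk' (pushRel φ ψ)

/-- The image of `R ⊕ Q` in the group pushout; this realizes the integralization of the
amalgamated sum `R ⊕_P Q`. -/
def imageM (Q : AddSubmonoid G_Q) (R : AddSubmonoid G_R)
    (φ : G_P →+ G_Q) (ψ : G_P →+ G_R) : AddSubmonoid (PushK φ ψ) :=
  (R.prod Q).map (pushMk φ ψ)

/-- The saturation `(R ⊕_P Q)^sat`, realized inside the group completion. -/
def satM (Q : AddSubmonoid G_Q) (R : AddSubmonoid G_R)
    (φ : G_P →+ G_Q) (ψ : G_P →+ G_R) : AddSubmonoid (PushK φ ψ) where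
  carrier := {a | ∃ n : ℕ, 1 ≤ n ∧ n • a ∈ imageM Q R φ ψ}
  zero_mem' := ⟨1, le_rfl, by simpa using (imageM Q R φ ψ).zero_mem⟩
  add_mem' := by
    rintro a b ⟨n, hn, ha⟩ ⟨k, hk, hb⟩
    refine ⟨n * k, Nat.one_le_iff_ne_zero.mpr (by positivity), ?_⟩
    have : (n * k) • (a + b) = k • (n • a) + n • (k • b) := by
      rw [smul_add, ← mul_smul, ← mul_smul, mul_comm k n]
    rw [this]
    exact add_mem (nsmul_mem ha k) (nsmul_mem hb n)

end

section auxpush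

variable {G : Type} [AddCommGroup G] {ΛP ΛQ ΛP' : AddSubgroup G}

/-- The image of `ΛP` inside `ΛQ`. -/
def myH (ΛP ΛQ : AddSubgroup G) : AddSubgroup ↥ΛQ := ΛP.comap ΛQ.subtype

variable (hQP' : ΛQ ≤ ΛP') (φ : ↥ΛP →+ ↥ΛP') (ψ : ↥ΛP →+ ↥ΛQ)

/-- The map splitting the pushout. -/
def myF : (↥ΛQ × ↥ΛP') →+ ↥ΛP' × (↥ΛQ ⧸ myH ΛP ΛQ) :=
  (AddMonoidHom.snd ↥ΛQ ↥ΛP' +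
      (AddSubgroup.inclusion hQP').comp (AddMonoidHom.fst ↥ΛQ ↥ΛP')).prod
    ((QuotientAddGroup.mk' (myH ΛP ΛQ)).comp (AddMonoidHom.fst ↥ΛQ ↥ΛP'))

theorem myF_apply (y : ↥ΛQ) (x : ↥ΛP') :
    myF (ΛP := ΛP) hQP' (y, x) =
      (x + AddSubgroup.inclusion hQP' y, QuotientAddGroup.mk' (myH ΛP ΛQ) y) := rfl

theorem myF_rel (hφ : ∀ x : ↥ΛP, ((φ x : ↥ΛP') : G) = x) (hψ : ∀ x : ↥ΛP, ((ψ x : ↥ΛQ) : G) = x) : ∀ z ∈ pushRel φ ψ, myF (ΛP := ΛP) hQP' z = 0 := by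
  have h : pushRel φ ψ ≤ (myF (ΛP := ΛP) hQP').ker := by
    refine (AddSubgroup.closure_le _).mpr ?_
    rintro w ⟨g, rfl⟩
    show myF (ΛP := ΛP) hQP' (ψ g, -(φ g)) = 0
    rw [myF_apply, Prod.mk_eq_zero]
    constructor
    · rw [neg_add_eq_zero]
      apply Subtype.ext
      rw [hφ g, AddSubgroup.coe_inclusion, hψ g]
    · exact (QuotientAddGroup.eq_zero_iff _).mpr
        (show ((ψ g : ↥ΛQ) : G) ∈ ΛP by rw [hψ g]; exact g.2)
  exact fun z hz => h hz

/-- The descended splitting map on the pushout. -/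
def myFbar (hφ : ∀ x : ↥ΛP, ((φ x : ↥ΛP') : G) = x) (hψ : ∀ x : ↥ΛP, ((ψ x : ↥ΛQ) : G) = x) : PushK φ ψ →+ ↥ΛP' × (↥ΛQ ⧸ myH ΛP ΛQ) :=
  QuotientAddGroup.lift _ (myF (ΛP := ΛP) hQP') (myF_rel hQP' φ ψ hφ hψ)

theorem myFbar_mk (hφ : ∀ x : ↥ΛP, ((φ x : ↥ΛP') : G) = x) (hψ : ∀ x : ↥ΛP, ((ψ x : ↥ΛQ) : G) = x) (y : ↥ΛQ) (x : ↥ΛP') :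
    myFbar hQP' φ ψ hφ hψ (pushMk φ ψ (y, x)) =
      (x + AddSubgroup.inclusion hQP' y, QuotientAddGroup.mk' (myH ΛP ΛQ) y) := rfl

/-- The inverse map. -/
def myG (hφ : ∀ x : ↥ΛP, ((φ x : ↥ΛP') : G) = x) (hψ : ∀ x : ↥ΛP, ((ψ x : ↥ΛQ) : G) = x) : ↥ΛP' × (↥ΛQ ⧸ myH ΛP ΛQ) →+ PushK φ ψ :=
  ((pushMk φ ψ).comp (AddMonoidHom.inr ↥ΛQ ↥ΛP')).coprod
    (QuotientAddGroup.lift (myH ΛP ΛQ)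
      ((pushMk φ ψ).comp ((AddMonoidHom.id ↥ΛQ).prod (-(AddSubgroup.inclusion hQP'))))
      (by
        intro y hy
        have hy' : ((y : ↥ΛQ) : G) ∈ ΛP := hy
        set g : ↥ΛP := ⟨(y : G), hy'⟩ with hg
        have h1 : (ψ g : ↥ΛQ) = y := Subtype.ext (by rw [hψ g])
        have h2 : (φ g : ↥ΛP') = AddSubgroup.inclusion hQP' y :=
          Subtype.ext (by rw [hφ g, AddSubgroup.coe_inclusion])
        show pushMk φ ψ (y, -(AddSubgroup.inclusion hQP' y)) = 0
        exact (QuotientAddGroup.eq_zero_iff _).mpr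
          (AddSubgroup.subset_closure ⟨g, by rw [h1, h2]⟩)))

theorem myG_mk (hφ : ∀ x : ↥ΛP, ((φ x : ↥ΛP') : G) = x) (hψ : ∀ x : ↥ΛP, ((ψ x : ↥ΛQ) : G) = x) (x : ↥ΛP') (y : ↥ΛQ) :
    myG hQP' φ ψ hφ hψ (x, QuotientAddGroup.mk' (myH ΛP ΛQ) y) =
      pushMk φ ψ (y, x - AddSubgroup.inclusion hQP' y) := by
  show pushMk φ ψ (0, x) + pushMk φ ψ (y, -(AddSubgroup.inclusion hQP' y)) = _
  rw [← map_add]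
  congr 1
  rw [Prod.mk_add_mk, zero_add, ← sub_eq_add_neg]

/-- The pushout splits. -/
def myE (hφ : ∀ x : ↥ΛP, ((φ x : ↥ΛP') : G) = x) (hψ : ∀ x : ↥ΛP, ((ψ x : ↥ΛQ) : G) = x) : PushK φ ψ ≃+ ↥ΛP' × (↥ΛQ ⧸ myH ΛP ΛQ) :=
  AddMonoidHom.toAddEquiv (myFbar hQP' φ ψ hφ hψ) (myG hQP' φ ψ hφ hψ)
    (by
      refine AddMonoidHom.ext fun a => QuotientAddGroup.induction_on a ?_
      rintro ⟨y, x⟩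
      show myG hQP' φ ψ hφ hψ (myFbar hQP' φ ψ hφ hψ (pushMk φ ψ (y, x))) = pushMk φ ψ (y, x)
      rw [myFbar_mk, myG_mk, add_sub_cancel_right])
    (by
      refine AddMonoidHom.ext fun b => ?_
      obtain ⟨x, c⟩ := b
      refine QuotientAddGroup.induction_on c ?_
      intro y
      show myFbar hQP' φ ψ hφ hψ
          (myG hQP' φ ψ hφ hψ (x, QuotientAddGroup.mk' (myH ΛP ΛQ) y)) = _
      rw [myG_mk, myFbar_mk, sub_add_cancel]
      rfl)

theorem myE_mk (hφ : ∀ x : ↥ΛP, ((φ x : ↥ΛP') : G) = x) (hψ : ∀ x : ↥ΛP, ((ψ x : ↥ΛQ) : G) = x) (y : ↥ΛQ) (x : ↥ΛP') :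
    myE hQP' φ ψ hφ hψ (pushMk φ ψ (y, x)) =
      (x + AddSubgroup.inclusion hQP' y, QuotientAddGroup.mk' (myH ΛP ΛQ) y) := rfl

end auxpush


/-- The monoid `P = ℤ≥0^r` inside `ℚ^r = P^gp ⊗ ℚ`. -/
def stdCone (r : ℕ) : AddSubmonoid (Fin r → ℚ) where
  carrier := {v | ∀ i, ∃ n : ℕ, v i = n}
  zero_mem' := fun i => ⟨0, by simp⟩
  add_mem' := by
    rintro a b ha hb i
    obtain ⟨n, hn⟩ := ha i; obtain ⟨k, hk⟩ := hb i
    exact ⟨n + k, by simp [hn, hk]⟩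

/-- The monoid `(1/n)P = (1/n)ℤ≥0^r` inside `ℚ^r`. -/
def scaleCone (r n : ℕ) : AddSubmonoid (Fin r → ℚ) where
  carrier := {v | n • v ∈ stdCone r}
  zero_mem' := by simpa using (stdCone r).zero_mem
  add_mem' := by
    intro a b ha hb
    have : (n : ℕ) • (a + b) = n • a + n • b := smul_add n a b
    simp only [Set.mem_setOf_eq] at *
    rw [this]
    exact (stdCone r).add_mem ha hb

theorem mem_stdCone {r : ℕ} {v : Fin r → ℚ} : v ∈ stdCone r ↔ ∀ i, ∃ n : ℕ, v i = n :=
  Iff.rfl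

theorem mem_scaleCone {r n : ℕ} {v : Fin r → ℚ} : v ∈ scaleCone r n ↔ n • v ∈ stdCone r :=
  Iff.rfl

theorem prod_nsmul_fst {α β : Type*} [AddMonoid α] [AddMonoid β] (n : ℕ) (p : α × β) :
    (n • p).1 = n • p.1 := rfl

theorem prod_nsmul_snd {α β : Type*} [AddMonoid α] [AddMonoid β] (n : ℕ) (p : α × β) :
    (n • p).2 = n • p.2 := rfl

set_option maxHeartbeats 4000000 in
/-- (From the proof of Lemma 4.20, `lem-Abhyankar-ref`): let `P = ℤ≥0^r` and let
`Q ⊆ (1/m)ℤ≥0^r` be a toric submonoid containing `P` with `Q = Q^gp ∩ (1/m)ℤ≥0^r` and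
`d! · Q ⊆ P`.  Then `(Q ⊕_P (1/d!)P)^sat` is the direct sum of `(1/d!)P` and a finite
abelian group annihilated by `d!`. -/
theorem stmt19 (r m d : ℕ) (hm : 1 ≤ m) (hd : 1 ≤ d)
    (Q : AddSubmonoid (Fin r → ℚ))
    (hPQ : stdCone r ≤ Q)
    (hQm : ∀ v ∈ Q, m • v ∈ stdCone r)
    (hQfg : Q.FG)
    (hQgp : ∀ v : Fin r → ℚ,
      v ∈ AddSubgroup.closure (Q : Set (Fin r → ℚ)) → m • v ∈ stdCone r → v ∈ Q)
    (hQd : ∀ v ∈ Q, d.factorial • v ∈ stdCone r)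
    -- the group completions `P^gp`, `Q^gp`, `((1/d!)P)^gp`, realized inside `ℚ^r`
    (ΛP ΛQ ΛP' : AddSubgroup (Fin r → ℚ))
    (hΛP : ΛP = AddSubgroup.closure ((stdCone r : Set (Fin r → ℚ))))
    (hΛQ : ΛQ = AddSubgroup.closure ((Q : Set (Fin r → ℚ))))
    (hΛP' : ΛP' = AddSubgroup.closure ((scaleCone r d.factorial : Set (Fin r → ℚ))))
    -- the inclusions `P^gp → ((1/d!)P)^gp` and `P^gp → Q^gp`
    (φ : ΛP →+ ΛP') (ψ : ΛP →+ ΛQ)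
    (hφ : ∀ x : ΛP, ((φ x : ΛP') : Fin r → ℚ) = (x : Fin r → ℚ))
    (hψ : ∀ x : ΛP, ((ψ x : ΛQ) : Fin r → ℚ) = (x : Fin r → ℚ)) :
    ∃ H : AddSubgroup ΛQ, Finite (ΛQ ⧸ H) ∧ (∀ y : ΛQ ⧸ H, d.factorial • y = 0) ∧
      Nonempty
        ((satM (AddSubmonoid.comap ΛP'.subtype (scaleCone r d.factorial))
            (AddSubmonoid.comap ΛQ.subtype Q) φ ψ) ≃+
          (scaleCone r d.factorial × (ΛQ ⧸ H))) := by
  classical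
  set N := d.factorial with hNdef
  have hNpos : 0 < N := d.factorial_pos
  have hN1 : 1 ≤ N := hNpos
  have hQsc : ∀ v ∈ Q, v ∈ scaleCone r N := fun v hv => mem_scaleCone.mpr (hQd v hv)
  have hscP' : ∀ v ∈ scaleCone r N, v ∈ ΛP' := fun v hv => hΛP' ▸ AddSubgroup.subset_closure hv
  have hPΛP : ∀ v ∈ stdCone r, v ∈ ΛP := fun v hv => hΛP ▸ AddSubgroup.subset_closure hv
  have hQΛQ : ∀ v ∈ Q, v ∈ ΛQ := fun v hv => hΛQ ▸ AddSubgroup.subset_closure hv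
  have hQP' : ΛQ ≤ ΛP' := by
    rw [hΛQ, hΛP']
    exact (AddSubgroup.closure_le _).mpr fun v hv => AddSubgroup.subset_closure (hQsc v hv)
  -- every element of ΛP' has coordinates in (1/N)ℤ
  have hL1 : ∀ v ∈ ΛP', ∀ i, ∃ k : ℤ, (N : ℚ) * v i = (k : ℚ) := by
    let SZ : AddSubgroup (Fin r → ℚ) :=
      { carrier := {w | ∀ i, ∃ k : ℤ, (N : ℚ) * w i = (k : ℚ)}
        zero_mem' := fun i => ⟨0, by simp⟩
        add_mem' := by
          rintro a b ha hb i
          obtain ⟨k1, h1⟩ := ha i; obtain ⟨k2, h2⟩ := hb i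
          exact ⟨k1 + k2, by push_cast; rw [Pi.add_apply, mul_add, h1, h2]⟩
        neg_mem' := by
          rintro a ha i
          obtain ⟨k, h⟩ := ha i
          exact ⟨-k, by push_cast; rw [Pi.neg_apply, mul_neg, h]⟩ }
    have hsub : ΛP' ≤ SZ := by
      rw [hΛP']
      refine (AddSubgroup.closure_le _).mpr ?_
      intro w hw
      intro i
      obtain ⟨t, ht⟩ := mem_stdCone.mp (mem_scaleCone.mp hw) i
      refine ⟨t, ?_⟩
      have h1 : ((N : ℕ) • w) i = (N : ℚ) * w i := by
        rw [Pi.smul_apply, nsmul_eq_mul]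
      rw [← h1, ht]; push_cast; ring
    exact fun v hv => hsub hv
  -- N • ΛQ ⊆ ΛP
  have hL2 : ∀ v ∈ ΛQ, N • v ∈ ΛP := by
    have hsub : ΛQ ≤ ΛP.comap
        (AddMonoidHom.mk' (fun w : Fin r → ℚ => N • w) fun a b => smul_add N a b) := by
      rw [hΛQ]
      refine (AddSubgroup.closure_le _).mpr ?_
      intro w hw
      exact hPΛP _ (hQd w hw)
    exact fun v hv => hsub hv
  set H : AddSubgroup ↥ΛQ := myH ΛP ΛQ with hHdef
  set e := myE hQP' φ ψ hφ hψ with he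
  -- the quotient is annihilated by N
  have hHtor : ∀ y : ↥ΛQ ⧸ H, N • y = 0 := by
    intro y
    refine QuotientAddGroup.induction_on y ?_
    intro w
    have h1 : ((N • w : ↥ΛQ) : Fin r → ℚ) = N • (w : Fin r → ℚ) := ΛQ.subtype.map_nsmul N w
    have h2 : (N • w) ∈ H := by
      show ((N • w : ↥ΛQ) : Fin r → ℚ) ∈ ΛP
      rw [h1]; exact hL2 _ w.2
    have h3 := (QuotientAddGroup.mk' H).map_nsmul N w
    rw [show ((w : ↥ΛQ ⧸ H)) = QuotientAddGroup.mk' H w from rfl, ← h3]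
    exact (QuotientAddGroup.eq_zero_iff _).mpr h2
  -- finiteness of the quotient
  have hFG : AddGroup.FG ↥ΛQ := by
    obtain ⟨S, hS⟩ := hQfg
    rw [AddGroup.fg_iff_addSubgroup_fg, AddSubgroup.fg_iff]
    refine ⟨(S : Set (Fin r → ℚ)), ?_, S.finite_toSet⟩
    rw [hΛQ]
    apply le_antisymm
    · refine (AddSubgroup.closure_le _).mpr ?_
      intro v hv
      exact AddSubgroup.subset_closure (by rw [← hS]; exact AddSubmonoid.subset_closure hv)
    · refine (AddSubgroup.closure_le _).mpr ?_
      intro v hv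
      have hv' : v ∈ AddSubmonoid.closure (S : Set (Fin r → ℚ)) := by rw [hS]; exact hv
      have hle : AddSubmonoid.closure (S : Set (Fin r → ℚ)) ≤
          (AddSubgroup.closure (S : Set (Fin r → ℚ))).toAddSubmonoid :=
        AddSubmonoid.closure_le.mpr fun x hx => AddSubgroup.subset_closure hx
      exact hle hv'
  haveI := hFG
  haveI : AddGroup.FG (↥ΛQ ⧸ H) := AddGroup.fg_of_surjective (QuotientAddGroup.mk'_surjective H)
  haveI hfin : Finite (↥ΛQ ⧸ H) :=
    AddCommGroup.finite_of_fg_torsion _ fun y =>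
      isOfFinAddOrder_iff_nsmul_eq_zero.mpr ⟨N, hNpos, hHtor y⟩
  set R'' : AddSubmonoid ↥ΛP' := AddSubmonoid.comap ΛP'.subtype (scaleCone r N) with hRdef
  set Q' : AddSubmonoid ↥ΛQ := AddSubmonoid.comap ΛQ.subtype Q with hQ'def
  -- the image of the saturation under the splitting equivalence
  have hmapeq : AddSubmonoid.map (e : PushK φ ψ →+ ↥ΛP' × (↥ΛQ ⧸ H)) (satM R'' Q' φ ψ) =
      R''.prod (⊤ : AddSubmonoid (↥ΛQ ⧸ H)) := by
    ext b
    obtain ⟨z, c⟩ := b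
    simp only [AddSubmonoid.mem_map, AddSubmonoid.mem_prod, AddSubmonoid.mem_top, and_true,
      AddEquiv.coe_toAddMonoidHom]
    constructor
    · rintro ⟨a, ha, hea⟩
      obtain ⟨n, hn, hmem⟩ := ha
      obtain ⟨⟨y, x⟩, hyx, hmk⟩ := AddSubmonoid.mem_map.mp hmem
      have hyx1 : (y : Fin r → ℚ) ∈ Q := (AddSubmonoid.mem_prod.mp hyx).1
      have hyx2 : (x : Fin r → ℚ) ∈ scaleCone r N := (AddSubmonoid.mem_prod.mp hyx).2
      have hE : n • e a = (x + AddSubgroup.inclusion hQP' y, QuotientAddGroup.mk' H y) := by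
        rw [← map_nsmul, ← hmk, he]
        exact myE_mk hQP' φ ψ hφ hψ y x
      have h1 : n • (e a).1 = x + AddSubgroup.inclusion hQP' y := by
        have h := congrArg Prod.fst hE
        rwa [prod_nsmul_fst] at h
      have hco : n • ((e a).1 : Fin r → ℚ) = (x : Fin r → ℚ) + (y : Fin r → ℚ) := by
        have h2 := congrArg (ΛP'.subtype) h1
        rw [map_nsmul, map_add] at h2
        simpa [AddSubgroup.coe_inclusion] using h2
      have hz : ((e a).1 : Fin r → ℚ) ∈ scaleCone r N := by
        rw [mem_scaleCone, mem_stdCone]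
        intro i
        obtain ⟨k, hk⟩ := hL1 _ (e a).1.2 i
        have hsum : n • ((e a).1 : Fin r → ℚ) ∈ scaleCone r N := by
          rw [hco]
          exact (scaleCone r N).add_mem hyx2 (hQsc _ hyx1)
        obtain ⟨t, ht⟩ := mem_stdCone.mp (mem_scaleCone.mp hsum) i
        have hcoord : ((N : ℕ) • ((n : ℕ) • ((e a).1 : Fin r → ℚ))) i =
            (N : ℚ) * ((n : ℚ) * ((e a).1 : Fin r → ℚ) i) := by
          simp [Pi.smul_apply, nsmul_eq_mul]
        have hnk : (n : ℚ) * (k : ℚ) = (t : ℚ) := by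
          calc (n : ℚ) * (k : ℚ) = (n : ℚ) * ((N : ℚ) * ((e a).1 : Fin r → ℚ) i) := by rw [hk]
            _ = (N : ℚ) * ((n : ℚ) * ((e a).1 : Fin r → ℚ) i) := by ring
            _ = (t : ℚ) := by rw [← hcoord]; exact ht
        have hn0 : (0 : ℚ) < (n : ℚ) := by exact_mod_cast hn
        have ht0 : (0 : ℚ) ≤ (t : ℚ) := by positivity
        have hkq : (0 : ℚ) ≤ (k : ℚ) := by nlinarith [hnk, hn0, ht0]
        have hk0 : (0 : ℤ) ≤ k := by exact_mod_cast hkq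
        refine ⟨k.toNat, ?_⟩
        have h4 : ((N : ℕ) • ((e a).1 : Fin r → ℚ)) i = (N : ℚ) * ((e a).1 : Fin r → ℚ) i := by
          rw [Pi.smul_apply, nsmul_eq_mul]
        rw [h4, hk]
        exact_mod_cast (Int.toNat_of_nonneg hk0).symm
      have hz1 : (e a).1 = z := congrArg Prod.fst hea
      have : (e a).1 ∈ R'' := hz
      rwa [hz1] at this
    · intro hzR
      refine QuotientAddGroup.induction_on c ?_
      intro y₀
      have hyvstd : N • (z : Fin r → ℚ) ∈ stdCone r :=
        mem_scaleCone.mp (AddSubmonoid.mem_comap.mp hzR)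
      have hyvQ : N • (z : Fin r → ℚ) ∈ Q := hPQ hyvstd
      set y : ↥ΛQ := ⟨N • (z : Fin r → ℚ), hQΛQ _ hyvQ⟩ with hy
      refine ⟨e.symm (z, (y₀ : ↥ΛQ ⧸ H)), ?_, by simp⟩
      show ∃ n : ℕ, 1 ≤ n ∧ n • (e.symm (z, (y₀ : ↥ΛQ ⧸ H))) ∈ imageM R'' Q' φ ψ
      refine ⟨N, hN1, ?_⟩
      refine AddSubmonoid.mem_map.mpr ⟨(y, 0), ?_, ?_⟩
      · exact AddSubmonoid.mem_prod.mpr ⟨AddSubmonoid.mem_comap.mpr hyvQ, R''.zero_mem⟩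
      · apply e.injective
        rw [map_nsmul, AddEquiv.apply_symm_apply, he]
        rw [myE_mk hQP' φ ψ hφ hψ y 0]
        refine Prod.ext ?_ ?_
        · show (0 : ↥ΛP') + AddSubgroup.inclusion hQP' y = (N • ((z, (y₀ : ↥ΛQ ⧸ H)) : ↥ΛP' × (↥ΛQ ⧸ H))).1
          rw [prod_nsmul_fst, zero_add]
          apply Subtype.ext
          rw [AddSubgroup.coe_inclusion]
          exact (ΛP'.subtype.map_nsmul N z).symm
        · show (QuotientAddGroup.mk' H y : ↥ΛQ ⧸ H) = (N • ((z, (y₀ : ↥ΛQ ⧸ H)) : ↥ΛP' × (↥ΛQ ⧸ H))).2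
          rw [prod_nsmul_snd]
          have h2 : (N • ((y₀ : ↥ΛQ ⧸ H))) = QuotientAddGroup.mk' H (N • y₀) :=
            ((QuotientAddGroup.mk' H).map_nsmul N y₀).symm
          rw [h2]
          have hsub : y - N • y₀ ∈ H := by
            show ((y - N • y₀ : ↥ΛQ) : Fin r → ℚ) ∈ ΛP
            have h5 : ((y - N • y₀ : ↥ΛQ) : Fin r → ℚ) =
                (y : Fin r → ℚ) - N • (y₀ : Fin r → ℚ) := by
              rw [AddSubgroupClass.coe_sub]
              congr 1
            rw [h5]
            exact ΛP.sub_mem (hPΛP _ hyvstd) (hL2 _ y₀.2)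
          exact (QuotientAddGroup.eq_iff_sub_mem).mpr hsub
  have eqR : ↥R'' ≃+ ↥(scaleCone r N) :=
    { toFun := fun x => ⟨((x : ↥ΛP') : Fin r → ℚ), x.2⟩
      invFun := fun v => ⟨⟨(v : Fin r → ℚ), hscP' _ v.2⟩, v.2⟩
      left_inv := fun x => rfl
      right_inv := fun v => rfl
      map_add' := fun a b => rfl }
  refine ⟨H, hfin, hHtor, ⟨?_⟩⟩
  exact (e.addSubmonoidMap (satM R'' Q' φ ψ)).trans
    ((AddEquiv.addSubmonoidCongr hmapeq).trans
      ((AddSubmonoid.prodEquiv R'' ⊤).trans (eqR.prodCongr AddSubmonoid.topEquiv)))
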